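/- arXiv:2307.06542 — 3 statements merged into one kernel-verified Lean document; each statement's English description precedes it below -/
import Mathlib

section
/- Let v, h be positive integers, n := v + h, Q ∈ ℝ^{n×n} symmetric, σ ∈ (0,1), and β_σ := log((1−σ)/σ). For ρ > 0 and x̃ ∈ {0,1}^v, let Q̃^{ρ,x̃} be Q with diagonal entries Q_{ii} + ρ(1 − 2x̃_i) for 1 ≤ i ≤ v (other entries unchanged), and define the thresholded average x̄(ρ,x̃) ∈ {0,1}^n by x̄(ρ,x̃)_i := 1 if Σ_{x ∈ {0,1}^n} P_{Q̃^{ρ,x̃}}(x) x_i > 1/2 and 0 otherwise. Define the overlap m(x, x') := (1/n)·Σ_{i=1}^n (2x_i − 1)(2x'_i − 1) and the averaged overlap M(ρ) := Σ_{x̃ ∈ {0,1}^v} Σ_{x ∈ {0,1}^n} P_σ(x̃ | x_{1..v}) P_Q(x) m(x̄(ρ,x̃), x), where P_σ(x̃ | x_{1..v}) = exp(−β_σ Σ_{i=1}^v (x̃_i − x_i)²)/(1 + e^{−β_σ})^v. Then for every ρ > 0, M(ρ) ≤ M(β_σ); that is, the averaged overlap is maximized by the choice ρ = log((1−σ)/σ).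 -/
noncomputable section

/-- Real-valued binary vector corresponding to a boolean vector. -/
def bvec {n : ℕ} (b : Fin n → Bool) : Fin n → ℝ := fun i => if b i then 1 else 0

/-- QUBO energy `f_Q(x) = Σ_{i,j} Q_{ij} x_i x_j`. -/
def quboEnergy {n : ℕ} (Q : Matrix (Fin n) (Fin n) ℝ) (x : Fin n → ℝ) : ℝ :=
  ∑ i, ∑ j, Q i j * x i * x j

/-- Boltzmann distribution on `{0,1}^n` with energy `f_Q`. -/
def boltzmann {n : ℕ} (Q : Matrix (Fin n) (Fin n) ℝ) (x : Fin n → Bool) : ℝ :=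
  Real.exp (-quboEnergy Q (bvec x)) /
    ∑ y : Fin n → Bool, Real.exp (-quboEnergy Q (bvec y))

/-- The modified matrix `Q̃^{ρ,x̃}`: `Q` with diagonal entries `Q_{ii} + ρ(1 - 2x̃_i)`
for the visible indices `i < v`, all other entries unchanged. -/
def modMatrixVis (v h : ℕ) (Q : Matrix (Fin (v + h)) (Fin (v + h)) ℝ) (ρ : ℝ)
    (xt : Fin v → Bool) : Matrix (Fin (v + h)) (Fin (v + h)) ℝ :=
  fun i j =>
    if i = j then
      (if hi : (i : ℕ) < v then
        Q i i + ρ * (1 - 2 * (if xt ⟨i, hi⟩ then (1 : ℝ) else 0))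
      else Q i i)
    else Q i j

/-- The thresholded average `x̄(ρ,x̃)`: pixel `i` is 1 iff the mean of coordinate `i`
under the Boltzmann distribution of the modified matrix exceeds 1/2. -/
def xbar (v h : ℕ) (Q : Matrix (Fin (v + h)) (Fin (v + h)) ℝ) (ρ : ℝ)
    (xt : Fin v → Bool) : Fin (v + h) → ℝ :=
  fun i =>
    if (1 / 2 : ℝ) < ∑ x : Fin (v + h) → Bool, boltzmann (modMatrixVis v h Q ρ xt) x * bvec x i
    then 1 else 0

/-- Overlap `m(x,x') = (1/n)·Σᵢ (2xᵢ - 1)(2x'ᵢ - 1)`. -/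
def overlap {n : ℕ} (x x' : Fin n → ℝ) : ℝ :=
  (1 / (n : ℝ)) * ∑ i, (2 * x i - 1) * (2 * x' i - 1)

/-- Salt-and-pepper noise probability of observing `x̃` on the visible part of `x`,
in Boltzmann form with inverse temperature `β`. -/
def noiseProbVis (v h : ℕ) (β : ℝ) (xt : Fin v → Bool) (x : Fin (v + h) → Bool) : ℝ :=
  Real.exp (-β * ∑ i : Fin v,
      ((if xt i then (1 : ℝ) else 0) - bvec x (Fin.castAdd h i)) ^ 2) /
    (1 + Real.exp (-β)) ^ v

/-- The averaged overlap `M(ρ)` between the true image and the thresholded denoised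
average, where the true image is drawn from `P_Q` and then afflicted by noise. -/
def avgOverlap (v h : ℕ) (Q : Matrix (Fin (v + h)) (Fin (v + h)) ℝ) (β ρ : ℝ) : ℝ :=
  ∑ xt : Fin v → Bool, ∑ x : Fin (v + h) → Bool,
    noiseProbVis v h β xt x * boltzmann Q x * overlap (xbar v h Q ρ xt) (bvec x)

/-!
By Bayes' rule the joint weight `P_σ(x̃ | x) P_Q(x)`, as a function of `x`, is a positive
multiple `c(x̃)` of `P_{Q̃^{β,x̃}}(x)`: the posterior of the clean image given `x̃` is the
Boltzmann distribution of the modified matrix at `ρ = β`. The overlap is linear in `x̄`, so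
`n M(ρ) = Σ_{x̃,i} (2 x̄(ρ,x̃)_i - 1) A_i(x̃)` with
`A_i(x̃) = spinCorr Q β x̃ i = Σ_x P_σ(x̃ | x) P_Q(x) (2 x_i - 1)`, and each term is at most `|A_i(x̃)|`. Since `A_i(x̃) = c(x̃) (2 ⟨x_i⟩_{Q̃^{β,x̃}} - 1)`,
thresholding the posterior mean at `1/2`, i.e. `ρ = β`, attains `|A_i(x̃)|` termwise.
-/

lemma two_mul_sub_one_mul_le_abs {t : ℝ} (ht : t = 0 ∨ t = 1) (a : ℝ) :
    (2 * t - 1) * a ≤ |a| := by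
  rcases ht with rfl | rfl
  · simpa using neg_le_abs a
  · norm_num [le_abs_self]

lemma threshold_mul_eq_abs {c : ℝ} (hc : 0 < c) (m : ℝ) :
    (2 * (if 1 / 2 < m then 1 else 0) - 1) * (c * (2 * m - 1)) = |c * (2 * m - 1)| := by
  split_ifs with hm
  · rw [abs_of_pos (by nlinarith)]; ring
  · rw [abs_of_nonpos (mul_nonpos_of_nonneg_of_nonpos hc.le (by linarith))]; ring

section Boltzmann

variable {n : ℕ}

def partitionFn (Q : Matrix (Fin n) (Fin n) ℝ) : ℝ :=
  ∑ y : Fin n → Bool, Real.exp (-quboEnergy Q (bvec y))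

lemma partitionFn_pos (Q : Matrix (Fin n) (Fin n) ℝ) : 0 < partitionFn Q :=
  Finset.sum_pos (fun _ _ => Real.exp_pos _) Finset.univ_nonempty

lemma boltzmann_eq (Q : Matrix (Fin n) (Fin n) ℝ) (x : Fin n → Bool) :
    boltzmann Q x = Real.exp (-quboEnergy Q (bvec x)) / partitionFn Q :=
  rfl

lemma sum_boltzmann (Q : Matrix (Fin n) (Fin n) ℝ) : ∑ x, boltzmann Q x = 1 := by
  simp only [boltzmann_eq, ← Finset.sum_div]
  exact div_self (partitionFn_pos Q).ne'

lemma sum_boltzmann_mul_spin (Q : Matrix (Fin n) (Fin n) ℝ) (i : Fin n) :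
    ∑ x, boltzmann Q x * (2 * bvec x i - 1) = 2 * ∑ x, boltzmann Q x * bvec x i - 1 := by
  simp only [mul_sub, mul_one, Finset.sum_sub_distrib, sum_boltzmann, Finset.mul_sum]
  ring_nf

lemma exp_neg_mul_boltzmann {Q Q' : Matrix (Fin n) (Fin n) ℝ} {x : Fin n → Bool} {g : ℝ}
    (hE : quboEnergy Q' (bvec x) = quboEnergy Q (bvec x) + g) :
    Real.exp (-g) * boltzmann Q x = partitionFn Q' / partitionFn Q * boltzmann Q' x := by
  have hZ := (partitionFn_pos Q).ne'
  have hZ' := (partitionFn_pos Q').ne'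
  simp only [boltzmann_eq, hE, neg_add, Real.exp_add]
  field_simp

lemma quboEnergy_add_diagonal (Q : Matrix (Fin n) (Fin n) ℝ) (d x : Fin n → ℝ) :
    quboEnergy (Q + Matrix.diagonal d) x = quboEnergy Q x + ∑ i, d i * x i * x i := by
  simp [quboEnergy, Matrix.diagonal_apply, add_mul, Finset.sum_add_distrib, ite_mul]

lemma bvec_mul_self (b : Fin n → Bool) (i : Fin n) : bvec b i * bvec b i = bvec b i := by
  unfold bvec; split_ifs <;> norm_num

end Boltzmann

section Denoising

variable {v h : ℕ}

def visibleField (xt : Fin v → Bool) (x : Fin (v + h) → Bool) : ℝ :=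
  ∑ i : Fin v, (1 - 2 * bvec xt i) * bvec x (Fin.castAdd h i)

lemma modMatrixVis_eq (Q : Matrix (Fin (v + h)) (Fin (v + h)) ℝ) (ρ : ℝ) (xt : Fin v → Bool) :
    modMatrixVis v h Q ρ xt =
      Q + Matrix.diagonal (Fin.append (fun i => ρ * (1 - 2 * bvec xt i)) 0) := by
  ext i j
  by_cases hij : i = j
  · subst hij
    refine Fin.addCases (fun k => ?_) (fun k => ?_) i <;> simp [modMatrixVis, bvec]
  · simp [modMatrixVis, hij]

lemma quboEnergy_modMatrixVis (Q : Matrix (Fin (v + h)) (Fin (v + h)) ℝ) (ρ : ℝ)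
    (xt : Fin v → Bool) (x : Fin (v + h) → Bool) :
    quboEnergy (modMatrixVis v h Q ρ xt) (bvec x) =
      quboEnergy Q (bvec x) + ρ * visibleField xt x := by
  rw [modMatrixVis_eq, quboEnergy_add_diagonal, Fin.sum_univ_add]
  simp [Fin.append_left, Fin.append_right, mul_assoc, bvec_mul_self, visibleField, Finset.mul_sum]

lemma noiseProbVis_eq (β : ℝ) (xt : Fin v → Bool) (x : Fin (v + h) → Bool) :
    noiseProbVis v h β xt x =
      Real.exp (-β * ∑ i, bvec xt i) / (1 + Real.exp (-β)) ^ v *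
        Real.exp (-(β * visibleField xt x)) := by
  have hsq : ∀ i : Fin v, (bvec xt i - bvec x (Fin.castAdd h i)) ^ 2 =
      bvec xt i + (1 - 2 * bvec xt i) * bvec x (Fin.castAdd h i) := by
    intro i
    unfold bvec
    split_ifs <;> norm_num
  have hexp : -β * ∑ i, (bvec xt i - bvec x (Fin.castAdd h i)) ^ 2 =
      -β * ∑ i, bvec xt i + -(β * visibleField xt x) := by
    simp only [hsq, Finset.sum_add_distrib, visibleField]
    ring
  rw [noiseProbVis, div_mul_eq_mul_div, ← Real.exp_add, ← hexp]
  rfl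

lemma exists_noiseProbVis_mul_boltzmann_eq (Q : Matrix (Fin (v + h)) (Fin (v + h)) ℝ) (β : ℝ)
    (xt : Fin v → Bool) :
    ∃ c > 0, ∀ x, noiseProbVis v h β xt x * boltzmann Q x =
      c * boltzmann (modMatrixVis v h Q β xt) x := by
  refine ⟨Real.exp (-β * ∑ i, bvec xt i) / (1 + Real.exp (-β)) ^ v *
      (partitionFn (modMatrixVis v h Q β xt) / partitionFn Q), ?_, fun x => ?_⟩
  · have := partitionFn_pos Q
    have := partitionFn_pos (modMatrixVis v h Q β xt)
    positivity
  · rw [noiseProbVis_eq, mul_assoc, exp_neg_mul_boltzmann (quboEnergy_modMatrixVis Q β xt x),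
      mul_assoc]

lemma xbar_eq_zero_or_one (Q : Matrix (Fin (v + h)) (Fin (v + h)) ℝ) (ρ : ℝ)
    (xt : Fin v → Bool) (i : Fin (v + h)) : xbar v h Q ρ xt i = 0 ∨ xbar v h Q ρ xt i = 1 := by
  unfold xbar
  split_ifs <;> simp

def spinCorr (Q : Matrix (Fin (v + h)) (Fin (v + h)) ℝ) (β : ℝ) (xt : Fin v → Bool)
    (i : Fin (v + h)) : ℝ :=
  ∑ x, noiseProbVis v h β xt x * boltzmann Q x * (2 * bvec x i - 1)

lemma avgOverlap_eq (Q : Matrix (Fin (v + h)) (Fin (v + h)) ℝ) (β ρ : ℝ) :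
    avgOverlap v h Q β ρ =
      1 / ((v + h : ℕ) : ℝ) * ∑ xt, ∑ i, (2 * xbar v h Q ρ xt i - 1) * spinCorr Q β xt i := by
  simp only [avgOverlap, overlap, spinCorr, Finset.mul_sum]
  refine Finset.sum_congr rfl fun xt _ => ?_
  rw [Finset.sum_comm]
  exact Finset.sum_congr rfl fun i _ => Finset.sum_congr rfl fun x _ => by ring

lemma spinCorr_eq {Q : Matrix (Fin (v + h)) (Fin (v + h)) ℝ} {β c : ℝ} {xt : Fin v → Bool}
    (hjoint : ∀ x, noiseProbVis v h β xt x * boltzmann Q x =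
      c * boltzmann (modMatrixVis v h Q β xt) x) (i : Fin (v + h)) :
    spinCorr Q β xt i = c * (2 * ∑ x, boltzmann (modMatrixVis v h Q β xt) x * bvec x i - 1) := by
  simp only [spinCorr, hjoint, mul_assoc, ← Finset.mul_sum, sum_boltzmann_mul_spin]

lemma xbar_mul_spinCorr_le (Q : Matrix (Fin (v + h)) (Fin (v + h)) ℝ) (β ρ : ℝ)
    (xt : Fin v → Bool) (i : Fin (v + h)) :
    (2 * xbar v h Q ρ xt i - 1) * spinCorr Q β xt i ≤
      (2 * xbar v h Q β xt i - 1) * spinCorr Q β xt i := by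
  obtain ⟨c, hc, hjoint⟩ := exists_noiseProbVis_mul_boltzmann_eq Q β xt
  rw [spinCorr_eq hjoint]
  calc _ ≤ _ := two_mul_sub_one_mul_le_abs (xbar_eq_zero_or_one Q ρ xt i) _
    _ = _ := (threshold_mul_eq_abs hc _).symm

end Denoising

theorem stmt_5_general (v h : ℕ)
    (Q : Matrix (Fin (v + h)) (Fin (v + h)) ℝ)
    (β : ℝ) :
    ∀ ρ : ℝ, 0 < ρ → avgOverlap v h Q β ρ ≤ avgOverlap v h Q β β := by
  intro ρ _
  rw [avgOverlap_eq, avgOverlap_eq]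
  refine mul_le_mul_of_nonneg_left ?_ (by positivity)
  exact Finset.sum_le_sum fun xt _ => Finset.sum_le_sum fun i _ => xbar_mul_spinCorr_le Q β ρ xt i

/-- The averaged overlap `M(ρ)` is maximized by the choice
`ρ = β_σ = log((1-σ)/σ)`: for every `ρ > 0`, `M(ρ) ≤ M(β_σ)`. -/
theorem stmt_5 (v h : ℕ) (hv : 0 < v) (hh : 0 < h)
    (Q : Matrix (Fin (v + h)) (Fin (v + h)) ℝ) (hQ : Q.IsSymm)
    (σ : ℝ) (hσ : σ ∈ Set.Ioo (0 : ℝ) 1)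
    (β : ℝ) (hβ : β = Real.log ((1 - σ) / σ)) :
    ∀ ρ : ℝ, 0 < ρ → avgOverlap v h Q β ρ ≤ avgOverlap v h Q β β :=
  stmt_5_general v h Q β

end
end

section
/- Let n be a positive integer, Q ∈ ℝ^{n×n} a diagonal matrix, ρ > 0, and x̃ ∈ {0,1}^n. Then the vector x* ∈ {0,1}^n defined by x*_i = 1 if Q_{ii} < −ρ, x*_i = 0 if Q_{ii} > ρ, and x*_i = x̃_i if |Q_{ii}| ≤ ρ, minimizes the penalized objective f_{Q,x̃,ρ}(x) = f_Q(x) + ρ·Σ_i (x_i − x̃_i)² over all x ∈ {0,1}^n. -/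
/-!
For diagonal `Q` the penalized objective splits into the sum over `i` of the one-dimensional
objectives `Q_{ii} x_i² + ρ (x_i - x̃_i)²`, so it suffices to minimize each summand over
`x_i ∈ {0,1}`: its values at `1` and `0` differ by `Q_{ii} ± ρ`, whose sign is decided by
comparing `Q_{ii}` with `±ρ`.
-/

noncomputable section

/-- The candidate minimizer: `x*_i = 1` if `Q_{ii} < -ρ`, `x*_i = 0` if `Q_{ii} > ρ`,
and `x*_i = x̃_i` if `|Q_{ii}| ≤ ρ`. -/
def xstar {n : ℕ} (Q : Matrix (Fin n) (Fin n) ℝ) (ρ : ℝ) (xt : Fin n → ℝ) : Fin n → ℝ :=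
  fun i => if Q i i < -ρ then 1 else if ρ < Q i i then 0 else xt i

theorem quboEnergy_of_isDiag {n : ℕ} {Q : Matrix (Fin n) (Fin n) ℝ} (hQ : Q.IsDiag)
    (x : Fin n → ℝ) : quboEnergy Q x = ∑ i, Q i i * x i ^ 2 := by
  refine Finset.sum_congr rfl fun i _ => ?_
  rw [Finset.sum_eq_single_of_mem i (Finset.mem_univ i) fun j _ hji => by simp [hQ hji.symm]]
  ring

section Threshold

variable {q ρ t : ℝ}

def threshold (q ρ t : ℝ) : ℝ :=
  if q < -ρ then 1 else if ρ < q then 0 else t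

theorem threshold_eq_zero_or_one (ht : t = 0 ∨ t = 1) :
    threshold q ρ t = 0 ∨ threshold q ρ t = 1 := by
  unfold threshold
  split_ifs <;> simp_all

theorem threshold_objective_le (hρ : 0 ≤ ρ) (ht : t = 0 ∨ t = 1) {x : ℝ} (hx : x = 0 ∨ x = 1) :
    q * threshold q ρ t ^ 2 + ρ * (threshold q ρ t - t) ^ 2 ≤ q * x ^ 2 + ρ * (x - t) ^ 2 := by
  unfold threshold
  rcases ht with rfl | rfl <;> rcases hx with rfl | rfl <;> split_ifs <;> linarith

end Threshold

theorem stmt_7_general (n : ℕ) (Q : Matrix (Fin n) (Fin n) ℝ) (hQ : Q.IsDiag)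
    (ρ : ℝ) (hρ : 0 < ρ)
    (xt : Fin n → ℝ) (hxt : ∀ i, xt i = 0 ∨ xt i = 1) :
    (∀ i, xstar Q ρ xt i = 0 ∨ xstar Q ρ xt i = 1) ∧
    ∀ x : Fin n → ℝ, (∀ i, x i = 0 ∨ x i = 1) →
      quboEnergy Q (xstar Q ρ xt) + ρ * ∑ i, (xstar Q ρ xt i - xt i) ^ 2
        ≤ quboEnergy Q x + ρ * ∑ i, (x i - xt i) ^ 2 := by
  refine ⟨fun i => threshold_eq_zero_or_one (hxt i), fun x hx => ?_⟩
  simp only [quboEnergy_of_isDiag hQ, Finset.mul_sum, ← Finset.sum_add_distrib]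
  exact Finset.sum_le_sum fun i _ => threshold_objective_le hρ.le (hxt i) (hx i)

/-- For a diagonal matrix `Q`, the vector `x*` defined coordinatewise by
thresholding the diagonal entries against `±ρ` minimizes the penalized objective
`f_Q(x) + ρ·Σᵢ (xᵢ - x̃ᵢ)²` over all binary vectors `x ∈ {0,1}^n`. -/
theorem stmt_7 (n : ℕ) (hn : 0 < n) (Q : Matrix (Fin n) (Fin n) ℝ) (hQ : Q.IsDiag)
    (ρ : ℝ) (hρ : 0 < ρ)
    (xt : Fin n → ℝ) (hxt : ∀ i, xt i = 0 ∨ xt i = 1) :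
    (∀ i, xstar Q ρ xt i = 0 ∨ xstar Q ρ xt i = 1) ∧
    ∀ x : Fin n → ℝ, (∀ i, x i = 0 ∨ x i = 1) →
      quboEnergy Q (xstar Q ρ xt) + ρ * ∑ i, (xstar Q ρ xt i - xt i) ^ 2
        ≤ quboEnergy Q x + ρ * ∑ i, (x i - xt i) ^ 2 :=
  stmt_7_general n Q hQ ρ hρ xt hxt

end
end

section
/- Let n be a positive integer, Q ∈ ℝ^{n×n} diagonal, σ ∈ (0,1), and ρ > 0. Let X ~ P_Q on {0,1}^n, let X̃ be X afflicted by salt-and-pepper noise of level σ, and let X* be defined by X*_i = 1 if Q_{ii} < −ρ, X*_i = 0 if Q_{ii} > ρ, and X*_i = X̃_i otherwise. Then for every index i with |Q_{ii}| > ρ one has P(X*_i = X_i) > 1/(1 + e^{−ρ}), and for every index i with |Q_{ii}| ≤ ρ one has P(X*_i = X_i) = 1 − σ. -/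
noncomputable section

/-- Probability of the i.i.d. Bernoulli(σ) noise pattern `ε`. -/
def noisePat {n : ℕ} (σ : ℝ) (ε : Fin n → Bool) : ℝ :=
  ∏ i, if ε i then σ else 1 - σ

/-- The denoised image: `X*_i = 1` if `Q_{ii} < -ρ`, `X*_i = 0` if `Q_{ii} > ρ`, and
`X*_i = X̃_i` otherwise, where `X̃ᵢ = Xᵢ XOR εᵢ` is the noisy image. -/
def denoised {n : ℕ} (Q : Matrix (Fin n) (Fin n) ℝ) (ρ : ℝ) (xt : Fin n → Bool) :
    Fin n → Bool :=
  fun i => if Q i i < -ρ then true else if ρ < Q i i then false else xt i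

/-!
For diagonal `Q` the energy `f_Q(x) = Σᵢ Q_{ii} xᵢ` is separable, so `P_Q` is a product
of independent bits with `P(Xᵢ = 0) = sigmoid Q_{ii}`, and the noise is an independent
product as well. Hence `P(X*ᵢ = Xᵢ)` only involves the pair `(Xᵢ, εᵢ)`. If `Q_{ii} > ρ`
then `X*ᵢ = 0` is correct with probability `sigmoid Q_{ii} > sigmoid ρ = 1/(1 + e^{-ρ})`,
symmetrically if `Q_{ii} < -ρ`; otherwise `X*ᵢ = X̃ᵢ` is correct exactly when `εᵢ = 0`.
-/

open Finset Real

theorem Fintype.sum_prod_mul_apply {ι α R : Type*} [Fintype ι] [DecidableEq ι] [Fintype α]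
    [CommSemiring R] (w : ι → α → R) (i : ι) (h : α → R) :
    ∑ x : ι → α, (∏ j, w j (x j)) * h (x i) =
      (∑ a, w i a * h a) * ∏ j ∈ univ.erase i, ∑ a, w j a := by
  have hfactor : ∀ x : ι → α,
      (∏ j, w j (x j)) * h (x i) = ∏ j, w j (x j) * if j = i then h (x j) else 1 := fun x => by
    rw [prod_mul_distrib, Fintype.prod_ite_eq']
  simp_rw [hfactor]
  rw [← Fintype.prod_sum fun j a => w j a * if j = i then h a else 1,
    ← mul_prod_erase univ _ (mem_univ i)]
  congr 1
  · simp
  · refine Finset.prod_congr rfl fun j hj => ?_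
    simp [ne_of_mem_erase hj]

theorem Fintype.sum_prod_div_mul_apply {ι α K : Type*} [Fintype ι] [DecidableEq ι] [Fintype α]
    [Field K] (w : ι → α → K) (hw : ∀ j, ∑ a, w j a ≠ 0) (i : ι) (h : α → K) :
    ∑ x : ι → α, (∏ j, w j (x j)) / (∑ y : ι → α, ∏ j, w j (y j)) * h (x i) =
      (∑ a, w i a * h a) / ∑ a, w i a := by
  simp_rw [div_mul_eq_mul_div, ← sum_div, Fintype.sum_prod_mul_apply, ← Fintype.prod_sum,
    ← mul_prod_erase univ _ (mem_univ i)]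
  exact mul_div_mul_right _ _ (prod_ne_zero_iff.mpr fun j _ => hw j)

theorem exp_neg_quboEnergy_of_isDiag {n : ℕ} {Q : Matrix (Fin n) (Fin n) ℝ} (hQ : Q.IsDiag)
    (x : Fin n → Bool) :
    exp (-quboEnergy Q (bvec x)) = ∏ j, if x j then exp (-Q j j) else 1 := by
  have hdiag : quboEnergy Q (bvec x) = ∑ j, if x j then Q j j else 0 := by
    refine sum_congr rfl fun j _ => ?_
    rw [sum_eq_single j (fun k _ hkj => by rw [hQ hkj.symm, zero_mul, zero_mul]) (by simp)]
    cases hx : x j <;> simp [bvec, hx]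
  rw [hdiag, ← sum_neg_distrib, exp_sum]
  exact Finset.prod_congr rfl fun j _ => by cases x j <;> simp

theorem sum_boltzmann_mul_apply {n : ℕ} {Q : Matrix (Fin n) (Fin n) ℝ} (hQ : Q.IsDiag)
    (i : Fin n) (h : Bool → ℝ) :
    ∑ x, boltzmann Q x * h (x i) = sigmoid (Q i i) * h false + sigmoid (-Q i i) * h true := by
  simp_rw [boltzmann, exp_neg_quboEnergy_of_isDiag hQ]
  rw [Fintype.sum_prod_div_mul_apply (fun j (b : Bool) => if b then exp (-Q j j) else 1)
    fun j => by positivity]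
  simp only [Fintype.sum_bool, if_true, Bool.false_eq_true, if_false, one_mul]
  rw [← sigmoid_mul_rexp_neg, sigmoid_def]
  field_simp
  ring

theorem sum_noisePat_mul_apply {n : ℕ} (σ : ℝ) (i : Fin n) (h : Bool → ℝ) :
    ∑ ε, noisePat σ ε * h (ε i) = (1 - σ) * h false + σ * h true := by
  simp only [noisePat, Fintype.sum_prod_mul_apply (fun _ (b : Bool) => if b then σ else 1 - σ),
    Fintype.sum_bool]
  simp [add_comm]

theorem sum_boltzmann_mul_noisePat_mul_apply {n : ℕ} {Q : Matrix (Fin n) (Fin n) ℝ}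
    (hQ : Q.IsDiag) (σ : ℝ) (i : Fin n) (g : Bool → Bool → ℝ) :
    ∑ x, ∑ ε, boltzmann Q x * noisePat σ ε * g (x i) (ε i) =
      sigmoid (Q i i) * ((1 - σ) * g false false + σ * g false true) +
        sigmoid (-Q i i) * ((1 - σ) * g true false + σ * g true true) := by
  simp_rw [mul_assoc, ← mul_sum, sum_noisePat_mul_apply]
  exact sum_boltzmann_mul_apply hQ i fun a => (1 - σ) * g a false + σ * g a true

section Denoised

variable {n : ℕ} {Q : Matrix (Fin n) (Fin n) ℝ} {ρ : ℝ} {i : Fin n} (xt : Fin n → Bool)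

theorem denoised_apply_of_lt (hρ : 0 ≤ ρ) (h : ρ < Q i i) : denoised Q ρ xt i = false := by
  simp [denoised, h, show ¬Q i i < -ρ by linarith]

theorem denoised_apply_of_lt_neg (h : Q i i < -ρ) : denoised Q ρ xt i = true := by
  simp [denoised, h]

theorem denoised_apply_of_abs_le (h : |Q i i| ≤ ρ) : denoised Q ρ xt i = xt i := by
  obtain ⟨h₁, h₂⟩ := abs_le.mp h
  simp [denoised, h₁.not_gt, h₂.not_gt]

end Denoised

theorem stmt_9_general (n : ℕ) (Q : Matrix (Fin n) (Fin n) ℝ) (hQ : Q.IsDiag)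
    (σ : ℝ) (ρ : ℝ) (hρ : 0 < ρ) :
    (∀ i : Fin n, ρ < |Q i i| →
      (∑ x : Fin n → Bool, ∑ ε : Fin n → Bool,
          boltzmann Q x * noisePat σ ε *
            (if denoised Q ρ (fun j => xor (x j) (ε j)) i = x i then (1 : ℝ) else 0))
        > 1 / (1 + Real.exp (-ρ))) ∧
    (∀ i : Fin n, |Q i i| ≤ ρ →
      (∑ x : Fin n → Bool, ∑ ε : Fin n → Bool,
          boltzmann Q x * noisePat σ ε *
            (if denoised Q ρ (fun j => xor (x j) (ε j)) i = x i then (1 : ℝ) else 0))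
        = 1 - σ) := by
  refine ⟨fun i hi => ?_, fun i hi => ?_⟩
  · rw [gt_iff_lt, one_div, ← sigmoid_def]
    rcases lt_abs.mp hi with h | h
    · have hsum :=
        sum_boltzmann_mul_noisePat_mul_apply hQ σ i fun a _ => if false = a then 1 else 0
      calc sigmoid ρ < sigmoid (Q i i) := sigmoid_lt h
        _ = _ := by simpa [denoised_apply_of_lt _ hρ.le h] using hsum.symm
    · have hsum :=
        sum_boltzmann_mul_noisePat_mul_apply hQ σ i fun a _ => if true = a then 1 else 0
      calc sigmoid ρ < sigmoid (-Q i i) := sigmoid_lt h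
        _ = _ := by simpa [denoised_apply_of_lt_neg _ (lt_neg.mpr h)] using hsum.symm
  · have hsum :=
      sum_boltzmann_mul_noisePat_mul_apply hQ σ i fun a e => if xor a e = a then 1 else 0
    calc _ = (sigmoid (Q i i) + sigmoid (-Q i i)) * (1 - σ) := by
          simpa [denoised_apply_of_abs_le _ hi, add_mul] using hsum
      _ = 1 - σ := by rw [sigmoid_neg, add_sub_cancel, one_mul]

/-- For diagonal `Q`, `X ~ P_Q`, `X̃` the salt-and-pepper noisy image, and
`X*` the coordinatewise-thresholded denoised image, every coordinate `i` with
`|Q_{ii}| > ρ` satisfies `P(X*_i = X_i) > 1/(1+e^{-ρ})`, and every coordinate with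
`|Q_{ii}| ≤ ρ` satisfies `P(X*_i = X_i) = 1 - σ`. Probabilities are written as explicit
sums over the image `x` and the independent noise pattern `ε`. -/
theorem stmt_9 (n : ℕ) (hn : 0 < n) (Q : Matrix (Fin n) (Fin n) ℝ) (hQ : Q.IsDiag)
    (σ : ℝ) (hσ : σ ∈ Set.Ioo (0 : ℝ) 1) (ρ : ℝ) (hρ : 0 < ρ) :
    (∀ i : Fin n, ρ < |Q i i| →
      (∑ x : Fin n → Bool, ∑ ε : Fin n → Bool,
          boltzmann Q x * noisePat σ ε *
            (if denoised Q ρ (fun j => xor (x j) (ε j)) i = x i then (1 : ℝ) else 0))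
        > 1 / (1 + Real.exp (-ρ))) ∧
    (∀ i : Fin n, |Q i i| ≤ ρ →
      (∑ x : Fin n → Bool, ∑ ε : Fin n → Bool,
          boltzmann Q x * noisePat σ ε *
            (if denoised Q ρ (fun j => xor (x j) (ε j)) i = x i then (1 : ℝ) else 0))
        = 1 - σ) :=
  stmt_9_general n Q hQ σ ρ hρ

end
end
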